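/- Let $R$ be a commutative ring with units $a, b, c, d, x, y, z, w$, and suppose $n = 1$. On $V^{\otimes 4}$ with $V = R^2$ and cyclic index convention, set $\mathcal{R}(e) = R^x_1 R^y_3$ and $\mathcal{R}(f) = R^z_2 R^w_4$, where $R^{q}_i$ are the cyclic cup-cap operators (with $R^w_4$ wrapping around from position 4 to position 1). Then $\mathcal{R}(e)\mathcal{R}(f)\mathcal{R}(e) = \big(\tfrac{xy}{zw} + 2 + \tfrac{zw}{xy}\big) \mathcal{R}(e)$ and $\mathcal{R}(f)\mathcal{R}(e)\mathcal{R}(f) = \big(\tfrac{xy}{zw} + 2 + \tfrac{zw}{xy}\big) \mathcal{R}(f)$. -/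
import Mathlib


/-- The cup-cap matrix `M_q` on `R² ⊗ R²`, indexed by pairs `(i,j)` with `i,j : Fin 2`
(`0` corresponds to `v₁`, `1` to `v₂`). Its only nonzero entries are
`M[(1,2),(1,2)] = q`, `M[(1,2),(2,1)] = 1`, `M[(2,1),(1,2)] = 1`, `M[(2,1),(2,1)] = q⁻¹`. -/
def cupcap {R : Type*} [CommRing R] (q : Rˣ) :
    Matrix (Fin 2 × Fin 2) (Fin 2 × Fin 2) R :=
  Matrix.of fun p p' =>
    if p = (0, 1) ∧ p' = (0, 1) then (q : R)
    else if p = (0, 1) ∧ p' = (1, 0) then 1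
    else if p = (1, 0) ∧ p' = (0, 1) then 1
    else if p = (1, 0) ∧ p' = (1, 0) then ((q⁻¹ : Rˣ) : R)
    else 0

/-- The operator on `V^{⊗ m}` (`V = R²`) acting as the cup-cap matrix `M_q` on the
tensor factors `i`, `j` and as the identity elsewhere, written as a matrix indexed
by basis sequences `Fin m → Fin 2`. -/
def cupcapOp {R : Type*} [CommRing R] {m : ℕ} (q : Rˣ) (i j : Fin m) :
    Matrix (Fin m → Fin 2) (Fin m → Fin 2) R :=
  Matrix.of fun β α =>
    (if ∀ k, k ≠ i → k ≠ j → β k = α k then (1 : R) else 0) *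
      cupcap q (β i, β j) (α i, α j)

section aux
open Matrix
variable {R : Type*} [CommRing R]

def cvec (q : Rˣ) : Fin 2 × Fin 2 → R := fun p =>
  if p = (0,1) then (q : R) else if p = (1,0) then 1 else 0

def rvec (q : Rˣ) : Fin 2 × Fin 2 → R := fun p =>
  if p = (0,1) then 1 else if p = (1,0) then ((q⁻¹ : Rˣ) : R) else 0

lemma cupcap_eq (q : Rˣ) :
    cupcap (R := R) q = Matrix.vecMulVec (cvec q) (rvec q) := by
  ext ⟨a,b⟩ ⟨c,d⟩
  fin_cases a <;> fin_cases b <;> fin_cases c <;> fin_cases d <;>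
    simp [cupcap, cvec, rvec, Matrix.vecMulVec_apply, Prod.ext_iff]

lemma vecMulVec_mul_vecMulVec {m : Type*} [Fintype m] [DecidableEq m]
    (a b c d : m → R) :
    Matrix.vecMulVec a b * Matrix.vecMulVec c d =
      (b ⬝ᵥ c) • Matrix.vecMulVec a d := by
  ext i j
  simp only [Matrix.mul_apply, Matrix.vecMulVec_apply, Matrix.smul_apply,
    dotProduct, smul_eq_mul, Finset.sum_mul, Finset.mul_sum]
  congr 1; ext k; ring

def cE (x y : Rˣ) : (Fin 4 → Fin 2) → R := fun β => cvec x (β 0, β 1) * cvec y (β 2, β 3)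
def rE (x y : Rˣ) : (Fin 4 → Fin 2) → R := fun α => rvec x (α 0, α 1) * rvec y (α 2, α 3)
def cF (z w : Rˣ) : (Fin 4 → Fin 2) → R := fun β => cvec z (β 1, β 2) * cvec w (β 3, β 0)
def rF (z w : Rˣ) : (Fin 4 → Fin 2) → R := fun α => rvec z (α 1, α 2) * rvec w (α 3, α 0)

lemma E_eq (x y : Rˣ) :
    cupcapOp (R := R) (m := 4) x 0 1 * cupcapOp y 2 3 =
      Matrix.vecMulVec (cE x y) (rE x y) := by
  ext β α
  rw [Matrix.mul_apply]
  rw [Finset.sum_eq_single (![α 0, α 1, β 2, β 3] : Fin 4 → Fin 2)]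
  · simp only [cupcapOp, Matrix.of_apply, cupcap_eq, Matrix.vecMulVec_apply]
    rw [if_pos, if_pos]
    · simp [cE, rE]; ring
    · intro k hk2 hk3; fin_cases k <;> simp_all
    · intro k hk0 hk1; fin_cases k <;> simp_all
  · intro γ _ hγ
    simp only [cupcapOp, Matrix.of_apply]
    by_cases h0 : γ 0 = α 0 ∧ γ 1 = α 1 ∧ γ 2 = β 2 ∧ γ 3 = β 3
    · exact absurd (by funext k; fin_cases k <;> simp [h0.1, h0.2.1, h0.2.2.1, h0.2.2.2]) hγ
    · push_neg at h0
      by_cases h2 : γ 2 = β 2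
      · by_cases h3 : γ 3 = β 3
        · have H : ¬ ∀ k : Fin 4, k ≠ 2 → k ≠ 3 → γ k = α k := fun hall =>
            h0 (hall 0 (by decide) (by decide)) (hall 1 (by decide) (by decide)) h2 h3
          rw [if_neg H]; ring
        · rw [if_neg (fun hall => h3 (hall 3 (by decide) (by decide)).symm)]
          simp
      · rw [if_neg (fun hall => h2 (hall 2 (by decide) (by decide)).symm)]
        simp
  · simp

lemma F_eq (z w : Rˣ) :
    cupcapOp (R := R) (m := 4) z 1 2 * cupcapOp w 3 0 =
      Matrix.vecMulVec (cF z w) (rF z w) := by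
  ext β α
  rw [Matrix.mul_apply]
  rw [Finset.sum_eq_single (![β 0, α 1, α 2, β 3] : Fin 4 → Fin 2)]
  · simp only [cupcapOp, Matrix.of_apply, cupcap_eq, Matrix.vecMulVec_apply]
    rw [if_pos, if_pos]
    · simp [cF, rF]; ring
    · intro k hk3 hk0; fin_cases k <;> simp_all
    · intro k hk1 hk2; fin_cases k <;> simp_all
  · intro γ _ hγ
    simp only [cupcapOp, Matrix.of_apply]
    by_cases h0 : γ 0 = β 0 ∧ γ 1 = α 1 ∧ γ 2 = α 2 ∧ γ 3 = β 3
    · exact absurd (by funext k; fin_cases k <;> simp [h0.1, h0.2.1, h0.2.2.1, h0.2.2.2]) hγ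
    · push_neg at h0
      by_cases hb0 : γ 0 = β 0
      · by_cases h3 : γ 3 = β 3
        · have H : ¬ ∀ k : Fin 4, k ≠ 3 → k ≠ 0 → γ k = α k := fun hall =>
            h0 hb0 (hall 1 (by decide) (by decide)) (hall 2 (by decide) (by decide)) h3
          rw [if_neg H]; ring
        · rw [if_neg (fun hall => h3 (hall 3 (by decide) (by decide)).symm)]
          simp
      · rw [if_neg (fun hall => hb0 (hall 0 (by decide) (by decide)).symm)]
        simp
  · simp

def e4 : (Fin 2 × Fin 2 × Fin 2 × Fin 2) ≃ (Fin 4 → Fin 2) where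
  toFun p := ![p.1, p.2.1, p.2.2.1, p.2.2.2]
  invFun γ := (γ 0, γ 1, γ 2, γ 3)
  left_inv := by decide
  right_inv := by decide

lemma dot1 (x y z w : Rˣ) :
    (rE (R := R) x y) ⬝ᵥ (cF z w) = 1 + (z : R) * w * ((x⁻¹ : Rˣ) : R) * ((y⁻¹ : Rˣ) : R) := by
  rw [dotProduct, Fintype.sum_equiv e4.symm _
    (fun p => rE x y (e4 p) * cF z w (e4 p)) (fun γ => by simp)]
  simp [Fintype.sum_prod_type, Fin.sum_univ_two, e4, rE, cF, rvec, cvec]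
  ring

lemma dot2 (x y z w : Rˣ) :
    (rF (R := R) z w) ⬝ᵥ (cE x y) = (x : R) * y * ((z⁻¹ : Rˣ) : R) * ((w⁻¹ : Rˣ) : R) + 1 := by
  rw [dotProduct, Fintype.sum_equiv e4.symm _
    (fun p => rF z w (e4 p) * cE x y (e4 p)) (fun γ => by simp)]
  simp [Fintype.sum_prod_type, Fin.sum_univ_two, e4, rE, cF, rF, cE, rvec, cvec]
  ring

end aux

/-- The `n = 1` case of the relations `IJI = κI`, `JIJ = κJ`: on `V^{⊗4}` with cyclic
indices (0-indexed), `ℛ(e) = R^x_1 R^y_3` acts at positions (0,1) and (2,3), and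
`ℛ(f) = R^z_2 R^w_4` acts at positions (1,2) and (3,0) (the latter wrapping around);
then `ℛ(e)ℛ(f)ℛ(e) = (xy/(zw) + 2 + zw/(xy)) ℛ(e)` and symmetrically for `ℛ(f)`. -/

theorem ef_kappa_relations {R : Type*} [CommRing R] (x y z w : Rˣ) :
    ((cupcapOp (m := 4) x 0 1 * cupcapOp y 2 3) *
        (cupcapOp z 1 2 * cupcapOp w 3 0) *
        (cupcapOp x 0 1 * cupcapOp y 2 3) =
      (((x * y : Rˣ) : R) * (((z * w)⁻¹ : Rˣ) : R) + 2 +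
        ((z * w : Rˣ) : R) * (((x * y)⁻¹ : Rˣ) : R)) •
        (cupcapOp x 0 1 * cupcapOp y 2 3)) ∧
    ((cupcapOp (m := 4) z 1 2 * cupcapOp w 3 0) *
        (cupcapOp x 0 1 * cupcapOp y 2 3) *
        (cupcapOp z 1 2 * cupcapOp w 3 0) =
      (((x * y : Rˣ) : R) * (((z * w)⁻¹ : Rˣ) : R) + 2 +
        ((z * w : Rˣ) : R) * (((x * y)⁻¹ : Rˣ) : R)) •
        (cupcapOp z 1 2 * cupcapOp w 3 0)) := by
  constructor
  · rw [E_eq, F_eq, vecMulVec_mul_vecMulVec, Matrix.smul_mul, vecMulVec_mul_vecMulVec,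
      dot1, dot2, smul_smul]
    congr 1
    simp only [_root_.mul_inv_rev, Units.val_mul]
    linear_combination ((y : R) * ↑y⁻¹ * ↑z * ↑z⁻¹ * ↑w * ↑w⁻¹) * Units.mul_inv x +
      ((z : R) * ↑z⁻¹ * ↑w * ↑w⁻¹) * Units.mul_inv y +
      ((w : R) * ↑w⁻¹) * Units.mul_inv z + Units.mul_inv w
  · rw [E_eq, F_eq, vecMulVec_mul_vecMulVec, Matrix.smul_mul, vecMulVec_mul_vecMulVec,
      dot1, dot2, smul_smul]
    congr 1
    simp only [_root_.mul_inv_rev, Units.val_mul]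
    linear_combination ((y : R) * ↑y⁻¹ * ↑z * ↑z⁻¹ * ↑w * ↑w⁻¹) * Units.mul_inv x +
      ((z : R) * ↑z⁻¹ * ↑w * ↑w⁻¹) * Units.mul_inv y +
      ((w : R) * ↑w⁻¹) * Units.mul_inv z + Units.mul_inv w
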